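/- In a finite directed graph G, a nonempty set X of vertices is a Schwartz component (i.e., a minimal nonempty set such that no arc of G goes from a vertex outside X to a vertex inside X) if and only if X is a strongly connected component of G into which no arc enters from outside X. -/

import Mathlib

/-!
Schwartz components of a finite directed graph are exactly the strongly
connected components with no incoming arcs from outside.
-/

variable {ι : Type*} [Fintype ι] [DecidableEq ι]

/-- `X` is a Schwartz component of the directed graph with arc relation `E`:
a minimal nonempty set of vertices such that no arc of the graph goes from a
vertex outside `X` to a vertex inside `X`. -/
def SchwartzComponent (E : ι → ι → Prop) (X : Finset ι) : Prop :=
  X.Nonempty ∧ (∀ b, b ∉ X → ∀ a ∈ X, ¬ E b a) ∧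
  ∀ Y, Y ⊆ X → Y.Nonempty → (∀ b, b ∉ Y → ∀ a ∈ Y, ¬ E b a) → Y = X

/-- `X` is a strongly connected component of the directed graph with arc
relation `E`: a maximal set of vertices such that every vertex of the set is
reachable from every other vertex of the set by a directed path. -/
def IsSCC (E : ι → ι → Prop) (X : Finset ι) : Prop :=
  (∀ a ∈ X, ∀ b ∈ X, Relation.ReflTransGen E a b) ∧
  ∀ Y : Finset ι, X ⊆ Y → (∀ a ∈ Y, ∀ b ∈ Y, Relation.ReflTransGen E a b) → Y = X

/-!
A set without incoming arcs contains every vertex that reaches it. Hence a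
strongly connected set meeting such a set lies inside it; this gives the
maximality of a Schwartz component among strongly connected sets, and the
minimality of a strongly connected set without incoming arcs. Conversely, for
`b` in a Schwartz component `X`, the vertices of `X` that reach `b` form a
nonempty set without incoming arcs, so by minimality they are all of `X`.
-/

open Relation

section

variable {V : Type*} {E : V → V → Prop}

theorem mem_of_reflTransGen_of_noIncoming {X : Finset V}
    (hX : ∀ b, b ∉ X → ∀ a ∈ X, ¬ E b a) {x a : V}
    (h : ReflTransGen E x a) (ha : a ∈ X) : x ∈ X := by
  induction h using ReflTransGen.head_induction_on with
  | refl => exact ha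
  | head hxy _ hy => exact not_not.1 fun hx => hX _ hx _ hy hxy

theorem subset_of_stronglyConnected_of_noIncoming {X Y : Finset V}
    (hY : ∀ b, b ∉ Y → ∀ a ∈ Y, ¬ E b a)
    (hX : ∀ a ∈ X, ∀ b ∈ X, ReflTransGen E a b) {b : V} (hbX : b ∈ X) (hbY : b ∈ Y) :
    X ⊆ Y :=
  fun _ ha => mem_of_reflTransGen_of_noIncoming hY (hX _ ha _ hbX) hbY

theorem stronglyConnected_of_minimal_noIncoming {X : Finset V}
    (hX : ∀ b, b ∉ X → ∀ a ∈ X, ¬ E b a)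
    (hmin : ∀ Y, Y ⊆ X → Y.Nonempty → (∀ b, b ∉ Y → ∀ a ∈ Y, ¬ E b a) → Y = X) :
    ∀ a ∈ X, ∀ b ∈ X, ReflTransGen E a b := by
  classical
  intro a ha b hb
  set Y := X.filter (ReflTransGen E · b)
  have hYX : Y ⊆ X := Finset.filter_subset _ _
  have hbY : b ∈ Y := Finset.mem_filter.2 ⟨hb, .refl⟩
  have hY : ∀ c, c ∉ Y → ∀ d ∈ Y, ¬ E c d := by
    intro c hc d hd hcd
    have hcX : c ∈ X := mem_of_reflTransGen_of_noIncoming hX (.single hcd) (hYX hd)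
    exact hc (Finset.mem_filter.2 ⟨hcX, .head hcd (Finset.mem_filter.1 hd).2⟩)
  rw [← hmin Y hYX ⟨b, hbY⟩ hY] at ha
  exact (Finset.mem_filter.1 ha).2

theorem isSCC_of_stronglyConnected_of_noIncoming {X : Finset V}
    (hne : X.Nonempty) (hX : ∀ b, b ∉ X → ∀ a ∈ X, ¬ E b a)
    (hconn : ∀ a ∈ X, ∀ b ∈ X, ReflTransGen E a b) : IsSCC E X := by
  refine ⟨hconn, fun Y hXY hY => ?_⟩
  obtain ⟨a, ha⟩ := hne
  exact (subset_of_stronglyConnected_of_noIncoming hX hY (hXY ha) ha).antisymm hXY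

end

/-- a nonempty set `X` of vertices of a finite directed graph is
a Schwartz component iff it is a strongly connected component into which no
arc enters from outside. -/
theorem schwartzComponent_iff_scc_no_incoming (E : ι → ι → Prop)
    (X : Finset ι) (hX : X.Nonempty) :
    SchwartzComponent E X ↔
    (IsSCC E X ∧ ∀ b, b ∉ X → ∀ a ∈ X, ¬ E b a) := by
  constructor
  · rintro ⟨-, hcl, hmin⟩
    exact ⟨isSCC_of_stronglyConnected_of_noIncoming hX hcl
      (stronglyConnected_of_minimal_noIncoming hcl hmin), hcl⟩
  · rintro ⟨⟨hconn, -⟩, hcl⟩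
    refine ⟨hX, hcl, fun Y hYX ⟨y, hy⟩ hY => ?_⟩
    exact hYX.antisymm (subset_of_stronglyConnected_of_noIncoming hY hconn (hYX hy) hy)
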